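/- Let A and B be τ-algebras. The following are equivalent: (1) B belongs to HSP(A), i.e., B is a homomorphic image of a subalgebra of a power of A; (2) there is a homomorphism of infinitary clone τ-algebras ε : A↑ → B↑ such that ε(t^A) = t^B for every τ-term t over {e_0, e_1, …} (in particular, the assignment t^A ↦ t^B is well-defined). -/

import Mathlib

/-! ### τ-algebras (homogeneous type: every symbol of arity ω) -/

/-- `α` is a homomorphism of τ-algebras from `(A, FA)` to `(B, FB)`. -/
def IsAlgHom {τ A B : Type} (FA : τ → (ℕ → A) → A) (FB : τ → (ℕ → B) → B)
    (α : A → B) : Prop :=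
  ∀ f s, α (FA f s) = FB f (fun i => α (s i))

/-! ### Infinitary clone τ-algebras -/

/-- The data of an infinitary clone τ-algebra on carrier `C`. -/
structure CloneData (τ C : Type) where
  e : ℕ → C
  F : τ → C
  q : C → (ℕ → C) → C

/-- Axioms (N1)–(N3) of infinitary clone τ-algebras. -/
def IsCloneAlg {τ C : Type} (d : CloneData τ C) : Prop :=
  (∀ (i : ℕ) (s : ℕ → C), d.q (d.e i) s = s i) ∧
  (∀ x : C, d.q x d.e = x) ∧
  (∀ (x : C) (y z : ℕ → C), d.q (d.q x y) z = d.q x (fun i => d.q (y i) z))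

/-- Homomorphisms of infinitary clone τ-algebras. -/
def IsCloneHom {τ C D : Type} (dC : CloneData τ C) (dD : CloneData τ D)
    (α : C → D) : Prop :=
  (∀ i, α (dC.e i) = dD.e i) ∧
  (∀ f, α (dC.F f) = dD.F f) ∧
  (∀ x s, α (dC.q x s) = dD.q (α x) (fun i => α (s i)))

/-- Subuniverses of an infinitary clone τ-algebra. -/
def IsCloneSubuniv {τ C : Type} (d : CloneData τ C) (S : Set C) : Prop :=
  (∀ i, d.e i ∈ S) ∧ (∀ f, d.F f ∈ S) ∧
  (∀ (a : C) (s : ℕ → C), a ∈ S → (∀ i, s i ∈ S) → d.q a s ∈ S)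

/-- The full functional infinitary clone τ-algebra `O^(ω)_A` on the value domain `(A, FA)`. -/
def fullCloneData {τ : Type} (A : Type) (FA : τ → (ℕ → A) → A) :
    CloneData τ ((ℕ → A) → A) where
  e i := fun s => s i
  F f := FA f
  q g h := fun s => g (fun i => h i s)

/-- The τ-algebra `C↓` associated with an infinitary clone τ-algebra. -/
def downOp {τ C : Type} (d : CloneData τ C) : τ → (ℕ → C) → C :=
  fun f s => d.q (d.F f) s

/-- The clone structure induced on a subuniverse. -/
def subCloneData {τ C : Type} (d : CloneData τ C) {S : Set C}
    (h : IsCloneSubuniv d S) : CloneData τ S where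
  e i := ⟨d.e i, h.1 i⟩
  F f := ⟨d.F f, h.2.1 f⟩
  q a s := ⟨d.q a.1 (fun i => (s i).1), h.2.2 _ _ a.2 (fun i => (s i).2)⟩

/-! ### Terms -/

/-- τ-terms over the variables `e 0, e 1, …`. -/
inductive Term (τ : Type) : Type
  | e : ℕ → Term τ
  | app : τ → (ℕ → Term τ) → Term τ

/-- Term operation of a τ-term on the τ-algebra `(A, FA)`. -/
def Term.eval {τ A : Type} (FA : τ → (ℕ → A) → A) : Term τ → (ℕ → A) → A
  | .e i, s => s i
  | .app f t, s => FA f (fun i => (t i).eval FA s)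

/-- Simultaneous substitution of terms for variables. -/
def Term.subst {τ : Type} : Term τ → (ℕ → Term τ) → Term τ
  | .e i, u => u i
  | .app f t, u => .app f (fun i => (t i).subst u)

theorem Term.eval_subst {τ A : Type} (FA : τ → (ℕ → A) → A) :
    ∀ (t : Term τ) (u : ℕ → Term τ) (s : ℕ → A),
      (t.subst u).eval FA s = t.eval FA (fun i => (u i).eval FA s)
  | .e _, _, _ => rfl
  | .app f t, u, s => by
      simp only [Term.subst, Term.eval]
      congr 1
      funext i
      exact Term.eval_subst FA (t i) u s

/-- The initial infinitary clone τ-algebra `N_τ̄` on the set of τ-terms. -/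
def initData (τ : Type) : CloneData τ (Term τ) where
  e := Term.e
  F f := Term.app f Term.e
  q := Term.subst

/-- The term infinitary clone τ-algebra `A↑` (as a clone structure on the set
of term operations of `A`). -/
def upData {τ A : Type} (FA : τ → (ℕ → A) → A) :
    CloneData τ {g : (ℕ → A) → A // ∃ t : Term τ, g = Term.eval FA t} where
  e i := ⟨fun s => s i, ⟨Term.e i, rfl⟩⟩
  F f := ⟨FA f, ⟨Term.app f Term.e, by funext s; rfl⟩⟩
  q g h := ⟨fun s => g.1 (fun i => (h i).1 s), by
    obtain ⟨t, ht⟩ := g.2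
    refine ⟨t.subst (fun i => (h i).2.choose), ?_⟩
    funext s
    rw [Term.eval_subst, ← ht]
    exact congrArg _ (funext fun i => by rw [← (h i).2.choose_spec])⟩

/-! ### Bundled algebras, varieties -/

/-- A bundled τ-algebra. -/
structure Alg (τ : Type) : Type 1 where
  carrier : Type
  op : τ → (ℕ → carrier) → carrier

/-- Subuniverses of a τ-algebra. -/
def IsSubuniv {τ : Type} (A : Alg τ) (S : Set A.carrier) : Prop :=
  ∀ f s, (∀ i, s i ∈ S) → A.op f s ∈ S

/-- The subalgebra on a subuniverse. -/
def subAlg {τ : Type} (A : Alg τ) (S : Set A.carrier) (h : IsSubuniv A S) : Alg τ :=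
  ⟨S, fun f s => ⟨A.op f (fun i => (s i).1), h f _ (fun i => (s i).2)⟩⟩

/-- Product of τ-algebras, with componentwise operations. -/
def prodAlg {τ I : Type} (A : I → Alg τ) : Alg τ :=
  ⟨∀ i, (A i).carrier, fun f s i => (A i).op f (fun n => s n i)⟩

/-- Power of a τ-algebra. -/
def powAlg {τ : Type} (A : Alg τ) (I : Type) : Alg τ := prodAlg (fun _ : I => A)

/-- A variety: a class of τ-algebras closed under homomorphic images,
subalgebras (together with isomorphic copies), and arbitrary products. -/
def IsVariety {τ : Type} (K : Alg τ → Prop) : Prop :=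
  (∀ A B : Alg τ, K A →
    (∃ α : A.carrier → B.carrier, Function.Surjective α ∧ IsAlgHom A.op B.op α) → K B) ∧
  (∀ A B : Alg τ, K A →
    (∃ α : B.carrier → A.carrier, Function.Injective α ∧ IsAlgHom B.op A.op α) → K B) ∧
  (∀ (I : Type) (A : I → Alg τ), (∀ i, K (A i)) → K (prodAlg A))

/-- The subuniverse generated by a subset. -/
def gen {τ : Type} (A : Alg τ) (X : Set A.carrier) : Set A.carrier :=
  ⋂₀ {S | IsSubuniv A S ∧ X ⊆ S}

theorem gen_subuniv {τ : Type} (A : Alg τ) (X : Set A.carrier) :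
    IsSubuniv A (gen A X) := by
  intro f s hs
  rw [gen, Set.mem_sInter]
  intro S hS
  exact hS.1 f s (fun i => Set.mem_sInter.1 (hs i) S hS)

/-- The subalgebra generated by a subset. -/
def genSubalg {τ : Type} (A : Alg τ) (X : Set A.carrier) : Alg τ :=
  subAlg A (gen A X) (gen_subuniv A X)

/-! ### Bundled infinitary clone algebras -/

/-- A bundled infinitary clone τ-algebra. -/
structure CAlg (τ : Type) : Type 1 where
  carrier : Type
  data : CloneData τ carrier
  isClone : IsCloneAlg data

/-- Componentwise product of clone data. -/
def prodCloneData {τ I : Type} {C : I → Type} (d : ∀ i, CloneData τ (C i)) :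
    CloneData τ (∀ i, C i) where
  e n := fun i => (d i).e n
  F f := fun i => (d i).F f
  q a s := fun i => (d i).q (a i) (fun n => s n i)

theorem prodCloneData_isClone {τ I : Type} {C : I → Type} (d : ∀ i, CloneData τ (C i))
    (h : ∀ i, IsCloneAlg (d i)) : IsCloneAlg (prodCloneData d) := by
  refine ⟨?_, ?_, ?_⟩
  · intro n s; funext i; exact (h i).1 n (fun m => s m i)
  · intro x; funext i; exact (h i).2.1 (x i)
  · intro x y z; funext i; exact (h i).2.2 (x i) (fun n => y n i) (fun n => z n i)

/-- Product of infinitary clone τ-algebras. -/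
def prodCAlg {τ I : Type} (Cs : I → CAlg τ) : CAlg τ :=
  ⟨∀ i, (Cs i).carrier, prodCloneData (fun i => (Cs i).data),
    prodCloneData_isClone _ (fun i => (Cs i).isClone)⟩

/-- A variety of infinitary clone τ-algebras. -/
def IsCloneVariety {τ : Type} (H : CAlg τ → Prop) : Prop :=
  (∀ C D : CAlg τ, H C →
    (∃ α : C.carrier → D.carrier, Function.Surjective α ∧ IsCloneHom C.data D.data α) → H D) ∧
  (∀ C D : CAlg τ, H C →
    (∃ α : D.carrier → C.carrier, Function.Injective α ∧ IsCloneHom D.data C.data α) → H D) ∧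
  (∀ (I : Type) (Cs : I → CAlg τ), (∀ i, H (Cs i)) → H (prodCAlg Cs))

/-! ### The operators △ and ▽ -/

/-- `K△`: clone algebras isomorphic to a subalgebra of `O^(ω)_A` for some `A ∈ K`. -/
def Tri {τ : Type} (K : Alg τ → Prop) (D : CAlg τ) : Prop :=
  ∃ A : Alg τ, K A ∧ ∃ α : D.carrier → ((ℕ → A.carrier) → A.carrier),
    Function.Injective α ∧ IsCloneHom D.data (fullCloneData A.carrier A.op) α

/-- `H▽`: τ-algebras isomorphic to some `A` having a functional infinitary clone
τ-algebra on value domain `A` belonging to `H`. -/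
def Nabla {τ : Type} (H : CAlg τ → Prop) (B : Alg τ) : Prop :=
  ∃ A : Alg τ,
    (∃ α : B.carrier → A.carrier, Function.Bijective α ∧ IsAlgHom B.op A.op α) ∧
    ∃ D : CAlg τ, H D ∧ ∃ β : D.carrier → ((ℕ → A.carrier) → A.carrier),
      Function.Injective β ∧ IsCloneHom D.data (fullCloneData A.carrier A.op) β

/-! ### Equational theories -/

/-- The equational theory of a class of τ-algebras. -/
def ThK {τ : Type} (K : Alg τ → Prop) : Set (Term τ × Term τ) :=
  {p | ∀ A : Alg τ, K A → Term.eval A.op p.1 = Term.eval A.op p.2}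

/-- The class of models of a set of identities. -/
def ModClass {τ : Type} (Sg : Set (Term τ × Term τ)) : Alg τ → Prop :=
  fun A => ∀ p ∈ Sg, Term.eval A.op p.1 = Term.eval A.op p.2

/-! ### HSP -/

/-- `B` is a homomorphic image of a subalgebra of a power of `A`. -/
def InHSP {τ : Type} (A B : Alg τ) : Prop :=
  ∃ (I : Type) (S : Set (powAlg A I).carrier) (h : IsSubuniv (powAlg A I) S)
    (α : (subAlg (powAlg A I) S h).carrier → B.carrier),
    Function.Surjective α ∧ IsAlgHom (subAlg (powAlg A I) S h).op B.op α

/-- `B` is a homomorphic image of a subalgebra of a finite power of `A`. -/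
def InHSPFin {τ : Type} (A B : Alg τ) : Prop :=
  ∃ (n : ℕ) (S : Set (powAlg A (Fin n)).carrier) (h : IsSubuniv (powAlg A (Fin n)) S)
    (α : (subAlg (powAlg A (Fin n)) S h).carrier → B.carrier),
    Function.Surjective α ∧ IsAlgHom (subAlg (powAlg A (Fin n)) S h).op B.op α

/-! ### Finite dimensionality -/

/-- An ω-ary operation has finite dimension. -/
def FinDimOp {A : Type} (g : (ℕ → A) → A) : Prop :=
  ∃ n : ℕ, ∀ s u : ℕ → A, (∀ i < n, s i = u i) → g s = g u

/-- A τ-algebra is finite-dimensional if all its term operations have finite dimension. -/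
def FinDimAlg {τ : Type} (A : Alg τ) : Prop :=
  ∀ t : Term τ, FinDimOp (Term.eval A.op t)

/-! Every identity of `A` holds in a member of `HSP(A)`. Conversely, if every identity of `A`
holds in `B`, then `B` is the image of the subalgebra of `A^(B → A)` consisting of the maps
`w ↦ t^A (w ∘ σ)` under `t^A (· ∘ σ) ↦ t^B σ`; this is well defined because two assignments
`σ, σ'` merge into one, which turns an equality of two such maps into an identity of `A`.
On the clone side, `t ↦ t^A` is a surjective clone homomorphism from the term clone, so
`t^A ↦ t^B` is a clone homomorphism as soon as it is well defined. -/

section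

variable {τ : Type}

def IdentitiesHoldIn (A B : Alg τ) : Prop :=
  ∀ t t' : Term τ, Term.eval A.op t = Term.eval A.op t' → Term.eval B.op t = Term.eval B.op t'

theorem IdentitiesHoldIn.refl (A : Alg τ) : IdentitiesHoldIn A A :=
  fun _ _ h => h

theorem IdentitiesHoldIn.trans {A B C : Alg τ} (hAB : IdentitiesHoldIn A B)
    (hBC : IdentitiesHoldIn B C) : IdentitiesHoldIn A C :=
  fun t t' h => hBC t t' (hAB t t' h)

theorem IsAlgHom.map_eval {A B : Type} {FA : τ → (ℕ → A) → A} {FB : τ → (ℕ → B) → B}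
    {α : A → B} (hα : IsAlgHom FA FB α) :
    ∀ (t : Term τ) (s : ℕ → A), α (t.eval FA s) = t.eval FB (α ∘ s)
  | .e _, _ => rfl
  | .app f t, s => by
      simp only [Term.eval, hα f]
      exact congrArg (FB f) (funext fun i => hα.map_eval (t i) s)

theorem identitiesHoldIn_of_surjective {A B : Alg τ} {α : A.carrier → B.carrier}
    (hsurj : Function.Surjective α) (hα : IsAlgHom A.op B.op α) : IdentitiesHoldIn A B := by
  intro t t' h
  funext s
  obtain ⟨u, rfl⟩ : ∃ u, α ∘ u = s := ⟨Function.surjInv hsurj ∘ s,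
    funext fun i => Function.surjInv_eq hsurj (s i)⟩
  rw [← hα.map_eval, ← hα.map_eval, h]

theorem identitiesHoldIn_of_injective {A B : Alg τ} {α : B.carrier → A.carrier}
    (hinj : Function.Injective α) (hα : IsAlgHom B.op A.op α) : IdentitiesHoldIn A B := by
  intro t t' h
  funext s
  apply hinj
  rw [hα.map_eval, hα.map_eval, h]

theorem identitiesHoldIn_prodAlg {I : Type} {A : Alg τ} {Bs : I → Alg τ}
    (h : ∀ i, IdentitiesHoldIn A (Bs i)) : IdentitiesHoldIn A (prodAlg Bs) := by
  intro t t' htt'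
  funext s i
  have hproj : IsAlgHom (prodAlg Bs).op (Bs i).op (fun x => x i) := fun _ _ => rfl
  rw [hproj.map_eval, hproj.map_eval, h i t t' htt']

theorem identitiesHoldIn_of_inHSP {A B : Alg τ} (h : InHSP A B) : IdentitiesHoldIn A B := by
  obtain ⟨I, S, hS, α, hsurj, hα⟩ := h
  have hpow : IdentitiesHoldIn A (powAlg A I) :=
    identitiesHoldIn_prodAlg fun _ => IdentitiesHoldIn.refl A
  have hsub : IdentitiesHoldIn (powAlg A I) (subAlg (powAlg A I) S hS) :=
    identitiesHoldIn_of_injective Subtype.val_injective fun _ _ => rfl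
  exact hpow.trans (hsub.trans (identitiesHoldIn_of_surjective hsurj hα))

def assignedTermAlg (τ X : Type) : Alg τ where
  carrier := Term τ × (ℕ → X)
  -- the variables of the `n`-th argument are renamed along `k ↦ Nat.pair n k`,
  -- so that countably many assignments merge into one
  op f s := (.app f fun n => (s n).1.subst fun k => .e (Nat.pair n k),
    fun i => (s (Nat.unpair i).1).2 (Nat.unpair i).2)

theorem isAlgHom_assignedTermAlg_eval (X : Alg τ) :
    IsAlgHom (assignedTermAlg τ X.carrier).op X.op (fun p => p.1.eval X.op p.2) := by
  intro f s
  simp only [assignedTermAlg, Term.eval, Term.eval_subst, Nat.unpair_pair]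

theorem isSubuniv_range {P C : Alg τ} {φ : P.carrier → C.carrier} (hφ : IsAlgHom P.op C.op φ) :
    IsSubuniv C (Set.range φ) := by
  intro f s hs
  choose p hp using hs
  refine ⟨P.op f p, ?_⟩
  rw [hφ f]
  exact congrArg (C.op f) (funext hp)

theorem inHSP_of_ker_le {A B P : Alg τ} {I : Type} {φ : P.carrier → (powAlg A I).carrier}
    {ψ : P.carrier → B.carrier} (hφ : IsAlgHom P.op (powAlg A I).op φ)
    (hψ : IsAlgHom P.op B.op ψ) (hsurj : Function.Surjective ψ)
    (hker : ∀ p p', φ p = φ p' → ψ p = ψ p') : InHSP A B := by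
  let α : Set.range φ → B.carrier := fun x => ψ x.2.choose
  have hα : ∀ p, α ⟨φ p, p, rfl⟩ = ψ p := fun p =>
    hker _ _ (Exists.choose_spec (p := fun q => φ q = φ p) ⟨p, rfl⟩)
  refine ⟨I, Set.range φ, isSubuniv_range hφ, α, fun b => ?_, fun f s => ?_⟩
  · obtain ⟨p, rfl⟩ := hsurj b
    exact ⟨_, hα p⟩
  · choose p hp using fun n => (s n).2
    have hs : s = fun n => ⟨φ (p n), p n, rfl⟩ := funext fun n => Subtype.ext (hp n).symm
    subst hs
    calc α _ = α ⟨φ (P.op f p), P.op f p, rfl⟩ := congrArg α (Subtype.ext (hφ f p).symm)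
      _ = B.op f (fun n => ψ (p n)) := by rw [hα, hψ f]
      _ = B.op f (fun n => α ⟨φ (p n), p n, rfl⟩) := by simp only [hα]

theorem eval_eq_of_forall_comp {A B : Alg τ} (h : IdentitiesHoldIn A B) {t t' : Term τ}
    {σ σ' : ℕ → B.carrier}
    (hw : ∀ w : B.carrier → A.carrier, t.eval A.op (w ∘ σ) = t'.eval A.op (w ∘ σ')) :
    t.eval B.op σ = t'.eval B.op σ' := by
  -- merge `σ` and `σ'` into one assignment `c`; an identity of `A` obtained by renaming
  -- variables along a right inverse `r` of `c` then yields the claim at the point `c`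
  let c : ℕ → B.carrier := Sum.elim σ σ' ∘ Equiv.natSumNatEquivNat.symm
  let r : B.carrier → ℕ := Function.invFun c
  have hσ : c ∘ r ∘ σ = σ := funext fun i =>
    Function.invFun_eq ⟨Equiv.natSumNatEquivNat (.inl i), by simp [c]⟩
  have hσ' : c ∘ r ∘ σ' = σ' := funext fun i =>
    Function.invFun_eq ⟨Equiv.natSumNatEquivNat (.inr i), by simp [c]⟩
  have hA : (t.subst (Term.e ∘ r ∘ σ)).eval A.op = (t'.subst (Term.e ∘ r ∘ σ')).eval A.op := by
    funext a
    simpa only [Term.eval_subst, Term.eval, Function.comp_def] using hw (a ∘ r)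
  have hB := congrFun (h _ _ hA) c
  simp only [Term.eval_subst, Term.eval, Function.comp_def] at hB
  rwa [← hσ, ← hσ']

theorem inHSP_of_identitiesHoldIn {A B : Alg τ} (h : IdentitiesHoldIn A B) : InHSP A B := by
  refine inHSP_of_ker_le (P := assignedTermAlg τ B.carrier) (I := B.carrier → A.carrier)
    (φ := fun p w => p.1.eval A.op (w ∘ p.2)) (fun f s => ?_)
    (isAlgHom_assignedTermAlg_eval B) (fun b => ⟨(.e 0, fun _ => b), rfl⟩)
    (fun p p' hpp' => eval_eq_of_forall_comp h (congrFun hpp'))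
  funext w
  exact isAlgHom_assignedTermAlg_eval A f fun n => ((s n).1, w ∘ (s n).2)

theorem exists_isCloneHom_comp_eq {N C D : Type} {dN : CloneData τ N} {dC : CloneData τ C}
    {dD : CloneData τ D} {π : N → C} {ρ : N → D} (hπ : IsCloneHom dN dC π)
    (hsurj : Function.Surjective π) (hρ : IsCloneHom dN dD ρ)
    (hker : ∀ x y, π x = π y → ρ x = ρ y) :
    ∃ ε : C → D, IsCloneHom dC dD ε ∧ ∀ x, ε (π x) = ρ x := by
  let ε := ρ ∘ Function.surjInv hsurj
  have hε : ∀ x, ε (π x) = ρ x := fun x => hker _ _ (Function.surjInv_eq hsurj (π x))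
  refine ⟨ε, ⟨fun i => ?_, fun f => ?_, fun x s => ?_⟩, hε⟩
  · rw [← hπ.1 i, hε, hρ.1 i]
  · rw [← hπ.2.1 f, hε, hρ.2.1 f]
  · obtain ⟨y, rfl⟩ := hsurj x
    obtain ⟨u, rfl⟩ : ∃ u, π ∘ u = s :=
      ⟨Function.surjInv hsurj ∘ s, funext fun i => Function.surjInv_eq hsurj (s i)⟩
    calc ε (dC.q (π y) (π ∘ u)) = ε (π (dN.q y u)) := congrArg ε (hπ.2.2 y u).symm
      _ = dD.q (ε (π y)) (ε ∘ π ∘ u) := by rw [hε, hρ.2.2]; simp only [Function.comp_def, hε]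

def termOpUp {A : Type} (FA : τ → (ℕ → A) → A) (t : Term τ) :
    {g : (ℕ → A) → A // ∃ t : Term τ, g = Term.eval FA t} :=
  ⟨t.eval FA, t, rfl⟩

theorem termOpUp_surjective {A : Type} (FA : τ → (ℕ → A) → A) :
    Function.Surjective (termOpUp FA) := by
  rintro ⟨g, t, rfl⟩
  exact ⟨t, rfl⟩

theorem isCloneHom_termOpUp {A : Type} (FA : τ → (ℕ → A) → A) :
    IsCloneHom (initData τ) (upData FA) (termOpUp FA) := by
  refine ⟨fun _ => rfl, fun _ => rfl, fun t u => Subtype.ext ?_⟩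
  funext s
  exact Term.eval_subst FA t u s

end

theorem stmt18 (τ : Type) (A B : Alg τ) :
    InHSP A B ↔
    ∃ ε : {g : (ℕ → A.carrier) → A.carrier // ∃ t : Term τ, g = Term.eval A.op t} →
        {g : (ℕ → B.carrier) → B.carrier // ∃ t : Term τ, g = Term.eval B.op t},
      IsCloneHom (upData A.op) (upData B.op) ε ∧
      ∀ t : Term τ, (ε ⟨Term.eval A.op t, ⟨t, rfl⟩⟩).1 = Term.eval B.op t := by
  constructor
  · intro h
    obtain ⟨ε, hε, hεt⟩ := exists_isCloneHom_comp_eq (isCloneHom_termOpUp A.op)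
      (termOpUp_surjective A.op) (isCloneHom_termOpUp B.op)
      fun t t' htt' => Subtype.ext (identitiesHoldIn_of_inHSP h t t' (congrArg Subtype.val htt'))
    exact ⟨ε, hε, fun t => congrArg Subtype.val (hεt t)⟩
  · rintro ⟨ε, -, hε⟩
    refine inHSP_of_identitiesHoldIn fun t t' htt' => ?_
    rw [← hε t, ← hε t']
    congr 2
    exact Subtype.ext htt'
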